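/- For any graph G, the list chromatic number (choosability) of G is at most the dynamic list chromatic number of the 2-subdivision of G. -/

import Mathlib

open Finset

open scoped Classical in
noncomputable def deg {V : Type*} [Fintype V] (G : SimpleGraph V) (v : V) : ℕ :=
  (Finset.univ.filter (fun u => G.Adj v u)).card

def IsProper {V : Type*} (G : SimpleGraph V) (c : V → ℕ) : Prop :=
  ∀ u v, G.Adj u v → c u ≠ c v

def IsDynamic {V : Type*} [Fintype V] (G : SimpleGraph V) (c : V → ℕ) : Prop :=
  IsProper G c ∧ ∀ v, 2 ≤ deg G v → ∃ a b, G.Adj v a ∧ G.Adj v b ∧ c a ≠ c b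

noncomputable def chrom {V : Type*} (G : SimpleGraph V) : ℕ :=
  sInf {n | ∃ c : V → ℕ, (∀ v, c v < n) ∧ IsProper G c}

noncomputable def dynChrom {V : Type*} [Fintype V] (G : SimpleGraph V) : ℕ :=
  sInf {n | ∃ c : V → ℕ, (∀ v, c v < n) ∧ IsDynamic G c}

def subdiv {V : Type*} (G : SimpleGraph V) : SimpleGraph (V ⊕ G.edgeSet) where
  Adj x y :=
    match x, y with
    | Sum.inl u, Sum.inr e => u ∈ (e : Sym2 V)
    | Sum.inr e, Sum.inl u => u ∈ (e : Sym2 V)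
    | _, _ => False
  symm := by constructor; rintro (u | e) (v | f) h <;> first | exact h | exact h.elim
  loopless := by constructor; rintro (u | e) h <;> exact h

noncomputable instance {V : Type*} [Fintype V] (G : SimpleGraph V) : Fintype G.edgeSet :=
  Fintype.ofFinite _

def Choosable {V : Type*} (G : SimpleGraph V) (ℓ : ℕ) : Prop :=
  ∀ L : V → Finset ℕ, (∀ v, (L v).card = ℓ) →
    ∃ c : V → ℕ, (∀ v, c v ∈ L v) ∧ IsProper G c

def DynChoosable {V : Type*} [Fintype V] (G : SimpleGraph V) (ℓ : ℕ) : Prop :=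
  ∀ L : V → Finset ℕ, (∀ v, (L v).card = ℓ) →
    ∃ c : V → ℕ, (∀ v, c v ∈ L v) ∧ IsDynamic G c

noncomputable def listChrom {V : Type*} (G : SimpleGraph V) : ℕ :=
  sInf {ℓ | Choosable G ℓ}

noncomputable def dynListChrom {V : Type*} [Fintype V] (G : SimpleGraph V) : ℕ :=
  sInf {ℓ | DynChoosable G ℓ}


/-!
A dynamic colouring of the 2-subdivision restricts to a proper colouring of `G`: the subdivision
vertex of an edge `uv` has exactly the two neighbours `u` and `v`, so dynamicity forces them to get
different colours. Extending a list assignment of `G` arbitrarily to the subdivision vertices thus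
turns dynamic `ℓ`-choosability of the subdivision into `ℓ`-choosability of `G`. The minimum
defining `dynListChrom` is attained because every finite graph is dynamically `|V|`-choosable
(Hall's theorem gives an injective choice from the lists).
-/

lemma Finset.exists_injective_forall_mem_of_card_le {ι α : Type*} [Fintype ι] [DecidableEq α]
    (L : ι → Finset α) (hL : ∀ i, Fintype.card ι ≤ (L i).card) :
    ∃ f : ι → α, Function.Injective f ∧ ∀ i, f i ∈ L i := by
  refine (Finset.all_card_le_biUnion_card_iff_exists_injective L).mp fun s => ?_
  rcases s.eq_empty_or_nonempty with rfl | ⟨i, hi⟩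
  · simp
  · calc s.card ≤ Fintype.card ι := s.card_le_univ
      _ ≤ (L i).card := hL i
      _ ≤ (s.biUnion L).card := Finset.card_le_card (Finset.subset_biUnion_of_mem L hi)

section Colorings

variable {V : Type*} {G : SimpleGraph V} {c : V → ℕ}

lemma IsProper.of_injective (hc : Function.Injective c) : IsProper G c :=
  fun _ _ huv h => G.ne_of_adj huv (hc h)

lemma two_le_deg_iff [Fintype V] {v : V} :
    2 ≤ deg G v ↔ ∃ a b, G.Adj v a ∧ G.Adj v b ∧ a ≠ b := by
  classical
  simp [deg, Nat.succ_le_iff, Finset.one_lt_card]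

lemma IsDynamic.of_injective [Fintype V] (hc : Function.Injective c) : IsDynamic G c := by
  refine ⟨.of_injective hc, fun v hv => ?_⟩
  obtain ⟨a, b, ha, hb, hab⟩ := two_le_deg_iff.mp hv
  exact ⟨a, b, ha, hb, hc.ne hab⟩

lemma IsDynamic.ne_of_forall_adj_iff [Fintype V] (hdyn : IsDynamic G c) {v a b : V}
    (hab : a ≠ b) (hv : ∀ x, G.Adj v x ↔ x = a ∨ x = b) : c a ≠ c b := by
  intro hcab
  have hconst : ∀ z, G.Adj v z → c z = c a := fun z hz => by
    rcases (hv z).mp hz with rfl | rfl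
    exacts [rfl, hcab.symm]
  have hdeg : 2 ≤ deg G v :=
    two_le_deg_iff.mpr ⟨a, b, (hv a).mpr (.inl rfl), (hv b).mpr (.inr rfl), hab⟩
  obtain ⟨x, y, hx, hy, hxy⟩ := hdyn.2 v hdeg
  exact hxy ((hconst x hx).trans (hconst y hy).symm)

lemma dynChoosable_card [Fintype V] : DynChoosable G (Fintype.card V) := by
  intro L hL
  obtain ⟨c, hinj, hmem⟩ := Finset.exists_injective_forall_mem_of_card_le L fun v => (hL v).ge
  exact ⟨c, hmem, .of_injective hinj⟩

lemma dynChoosable_dynListChrom [Fintype V] : DynChoosable G (dynListChrom G) :=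
  Nat.sInf_mem (s := {ℓ | DynChoosable G ℓ}) ⟨_, dynChoosable_card⟩

end Colorings

section Subdivision

variable {V : Type*} {G : SimpleGraph V}

lemma subdiv_adj_inr_iff {e : G.edgeSet} {x : V ⊕ G.edgeSet} :
    (subdiv G).Adj (.inr e) x ↔ ∃ u ∈ (e : Sym2 V), x = .inl u := by
  rcases x with u | f
  · exact ⟨fun h => ⟨u, h, rfl⟩, fun ⟨_, hw, hx⟩ => Sum.inl_injective hx ▸ hw⟩
  · exact ⟨False.elim, fun ⟨_, _, hx⟩ => Sum.inr_ne_inl hx⟩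

lemma subdiv_adj_edge_iff {u v : V} (huv : G.Adj u v) {x : V ⊕ G.edgeSet} :
    (subdiv G).Adj (.inr ⟨s(u, v), huv⟩) x ↔ x = .inl u ∨ x = .inl v := by
  simp [subdiv_adj_inr_iff]

lemma IsDynamic.isProper_comp_inl_subdiv [Fintype V] {c : V ⊕ G.edgeSet → ℕ}
    (hc : IsDynamic (subdiv G) c) : IsProper G (c ∘ .inl) :=
  fun _ _ huv => hc.ne_of_forall_adj_iff (by simpa using G.ne_of_adj huv)
    fun _ => subdiv_adj_edge_iff huv

lemma choosable_of_dynChoosable_subdiv [Fintype V] {ℓ : ℕ} (h : DynChoosable (subdiv G) ℓ) :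
    Choosable G ℓ := by
  intro L hL
  obtain ⟨c, hmem, hc⟩ := h (Sum.elim L fun _ => Finset.range ℓ) (by rintro (v | e) <;> simp [hL])
  exact ⟨c ∘ .inl, fun v => hmem (.inl v), hc.isProper_comp_inl_subdiv⟩

end Subdivision

theorem listChrom_le_dynListChrom_subdiv_general {V : Type*} [Fintype V]
    (G : SimpleGraph V) : listChrom G ≤ dynListChrom (subdiv G) :=
  Nat.sInf_le (choosable_of_dynChoosable_subdiv dynChoosable_dynListChrom)

theorem listChrom_le_dynListChrom_subdiv {V : Type*} [Fintype V] [DecidableEq V]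
    (G : SimpleGraph V) : listChrom G ≤ dynListChrom (subdiv G) :=
  listChrom_le_dynListChrom_subdiv_general G
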